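/- Let w be a C¹ map on an open set of ℝ³ with w(x) ≠ 0, and for τ > 0 define ẘ = τ w/|w|. Then ∇ẘ = (τ/|w|)(∇w − w̄ ⊗ (∇w)^T w̄) pointwise, and consequently (adj ∇ẘ)(ẘ/|ẘ|³) = (adj ∇w)(w/|w|³), i.e. G(ẘ) = G(w). -/

import Mathlib

open Matrix

/-- The Euclidean norm on ℝ³ (realized as `Fin 3 → ℝ`). -/
noncomputable def norm3 (x : Fin 3 → ℝ) : ℝ := Real.sqrt (∑ i, x i ^ 2)

lemma norm3_pos {x : Fin 3 → ℝ} (hx : x ≠ 0) : 0 < norm3 x := by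
  apply Real.sqrt_pos.2
  have : ∃ i, x i ≠ 0 := by
    by_contra h; push_neg at h; exact hx (funext h)
  obtain ⟨i, hi⟩ := this
  have : 0 < x i ^ 2 := by positivity
  exact lt_of_lt_of_le this (Finset.single_le_sum (fun j _ => sq_nonneg (x j)) (Finset.mem_univ i))

lemma norm3_sq (x : Fin 3 → ℝ) : norm3 x ^ 2 = ∑ i, x i ^ 2 :=
  Real.sq_sqrt (Finset.sum_nonneg fun i _ => sq_nonneg (x i))

lemma norm3_smul (c : ℝ) (x : Fin 3 → ℝ) : norm3 (c • x) = |c| * norm3 x := by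
  simp only [norm3, Pi.smul_apply, smul_eq_mul, mul_pow, ← Finset.mul_sum]
  rw [Real.sqrt_mul (sq_nonneg c), Real.sqrt_sq_eq_abs]

lemma key_adj (A : Matrix (Fin 3) (Fin 3) ℝ) (v : Fin 3 → ℝ) (c : ℝ) :
    Matrix.adjugate (A - Matrix.vecMulVec (c • v) (A.transpose *ᵥ (c • v))) *ᵥ v
      = Matrix.adjugate A *ᵥ v := by
  funext i
  fin_cases i <;>
  · simp [Matrix.adjugate_fin_three, Matrix.mulVec, Matrix.vecMulVec_apply, dotProduct,
      Fin.sum_univ_three, Matrix.sub_apply, Matrix.transpose_apply]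
    ring

/-- for a C¹ nonvanishing map w on an open set U and τ > 0, the map
ẘ = τ w/|w| satisfies ∇ẘ = (τ/|w|)(∇w − w̄ ⊗ (∇w)ᵀ w̄) and G(ẘ) = G(w) on U. -/
theorem circle_map_gradient_and_G (U : Set (Fin 3 → ℝ)) (hU : IsOpen U)
    (w : (Fin 3 → ℝ) → (Fin 3 → ℝ)) (hw : ContDiffOn ℝ 1 w U)
    (hw0 : ∀ x ∈ U, w x ≠ 0) (τ : ℝ) (hτ : 0 < τ)
    (wc : (Fin 3 → ℝ) → (Fin 3 → ℝ))
    (hwc : ∀ x, wc x = (τ / norm3 (w x)) • w x)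
    (J Jc : (Fin 3 → ℝ) → Matrix (Fin 3) (Fin 3) ℝ)
    (hJ : ∀ x, J x = Matrix.of fun i j => fderiv ℝ w x (Pi.single j 1) i)
    (hJc : ∀ x, Jc x = Matrix.of fun i j => fderiv ℝ wc x (Pi.single j 1) i) :
    ∀ x ∈ U,
      Jc x = (τ / norm3 (w x)) •
          (J x - vecMulVec ((norm3 (w x))⁻¹ • w x)
            ((J x).transpose *ᵥ ((norm3 (w x))⁻¹ • w x)))
      ∧ Matrix.adjugate (Jc x) *ᵥ (((norm3 (wc x)) ^ 3)⁻¹ • wc x)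
          = Matrix.adjugate (J x) *ᵥ (((norm3 (w x)) ^ 3)⁻¹ • w x) := by
  intro x hx
  have hwx : w x ≠ 0 := hw0 x hx
  set f : ℝ := norm3 (w x) with hf
  have hfpos : 0 < f := norm3_pos hwx
  have hfne : f ≠ 0 := ne_of_gt hfpos
  have hτne : τ ≠ 0 := ne_of_gt hτ
  have hdiff : DifferentiableAt ℝ w x :=
    (hw.differentiableOn one_ne_zero).differentiableAt (hU.mem_nhds hx)
  set D := fderiv ℝ w x with hD
  have hdw : HasFDerivAt w D x := hdiff.hasFDerivAt
  set Q : (Fin 3 → ℝ) →L[ℝ] ℝ :=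
    ∑ i : Fin 3, (2 * w x i) • ((ContinuousLinearMap.proj i : (Fin 3 → ℝ) →L[ℝ] ℝ).comp D)
    with hQ
  have hq : HasFDerivAt (fun y => ∑ i, w y i ^ 2) Q x := by
    rw [hQ]
    apply HasFDerivAt.fun_sum
    intro i _
    have h1 : HasFDerivAt (fun y => w y i)
        ((ContinuousLinearMap.proj i : (Fin 3 → ℝ) →L[ℝ] ℝ).comp D) x :=
      ((ContinuousLinearMap.proj (R := ℝ) (φ := fun _ : Fin 3 => ℝ)
        i).hasFDerivAt (x := w x)).comp x hdw
    have h2 := h1.fun_mul h1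
    simpa [pow_two, two_mul, add_smul] using h2
  have hqpos : 0 < ∑ i, w x i ^ 2 := by rw [← norm3_sq]; positivity
  have hsqf : Real.sqrt (∑ i, w x i ^ 2) = f := rfl
  have hsqrt : HasFDerivAt (fun y => norm3 (w y)) ((1 / (2 * f)) • Q) x := by
    have h := (Real.hasDerivAt_sqrt (ne_of_gt hqpos)).comp_hasFDerivAt x hq
    rw [hsqf] at h
    exact h
  have hg : HasFDerivAt (fun y => τ / norm3 (w y))
      ((τ * (-(f ^ 2)⁻¹) * (1 / (2 * f))) • Q) x := by
    have h := ((hasDerivAt_inv hfne).comp_hasFDerivAt x hsqrt).const_mul τ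
    simp only [div_eq_mul_inv]
    refine h.congr_fderiv ?_
    module
  have hwcD : HasFDerivAt wc ((τ / f) • D +
      ((τ * (-(f ^ 2)⁻¹) * (1 / (2 * f))) • Q).smulRight (w x)) x := by
    have h := hg.smul hdw
    have hfun : wc = fun y => (τ / norm3 (w y)) • w y := funext hwc
    rw [hfun]
    exact h
  have hfderiv : fderiv ℝ wc x = (τ / f) • D +
      ((τ * (-(f ^ 2)⁻¹) * (1 / (2 * f))) • Q).smulRight (w x) := hwcD.fderiv
  have hmain : Jc x = (τ / f) •
      (J x - vecMulVec (f⁻¹ • w x) ((J x).transpose *ᵥ (f⁻¹ • w x))) := by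
    rw [hJc, hJ]
    ext i j
    simp only [Matrix.of_apply, hfderiv, Matrix.smul_apply, Matrix.sub_apply,
      vecMulVec_apply, Matrix.transpose_apply, Matrix.mulVec, dotProduct,
      ContinuousLinearMap.add_apply, ContinuousLinearMap.coe_smul', Pi.smul_apply,
      ContinuousLinearMap.smulRight_apply, ContinuousLinearMap.sum_apply,
      ContinuousLinearMap.comp_apply, ContinuousLinearMap.proj_apply,
      smul_eq_mul, Fin.sum_univ_three, hQ, ← hD, Pi.add_apply]
    field_simp
    ring
  refine ⟨hmain, ?_⟩
  have hwcx : wc x = (τ / f) • w x := hwc x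
  have hnwc : norm3 (wc x) = τ := by
    rw [hwcx, norm3_smul, abs_of_pos (by positivity), div_mul_cancel₀ _ hfne]
  rw [hmain, hnwc, hwcx, Matrix.adjugate_smul, smul_mulVec, smul_smul,
    Matrix.mulVec_smul, key_adj, smul_smul, Matrix.mulVec_smul]
  congr 1
  simp only [Fintype.card_fin]
  rw [show (3:ℕ) - 1 = 2 from rfl]
  field_simp
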